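/- Let n ≥ 2 and let G be the anticycle on the n+3 vertices x, z_1, z_2, y_1,…,y_n. Then neither x y_1^2 z_1 nor x y_n^2 z_2 belongs to I(G)^2. -/

import Mathlib

open MvPolynomial

/-! The anticycle `G` on the `n+3` vertices `x, z₁, y₁, …, y_n, z₂`, realized on `Fin (n+3)`
with the cycle labeling `x = 0`, `z₁ = 1`, `y_i = i+1` (so `y_i` has index `i+2` for the
0-indexed `i : Fin n`), `z₂ = n+2`.  The non-edges of `G` are exactly the consecutive pairs
on the cycle `x ∼ z₁ ∼ y₁ ∼ ⋯ ∼ y_n ∼ z₂ ∼ x`. -/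

/-- The vertex `x`. -/
def vx (n : ℕ) : Fin (n + 3) := ⟨0, by omega⟩
/-- The vertex `z₁`. -/
def vz1 (n : ℕ) : Fin (n + 3) := ⟨1, by omega⟩
/-- The vertex `z₂`. -/
def vz2 (n : ℕ) : Fin (n + 3) := ⟨n + 2, by omega⟩
/-- The vertex `y_i` (0-indexed: `vy n i` is `y_{i+1}` of the paper). -/
def vy (n : ℕ) (i : Fin n) : Fin (n + 3) := ⟨(i : ℕ) + 2, by omega⟩

/-- Adjacency in the anticycle (complement of the `N`-cycle) on `Fin N`:
two distinct vertices are adjacent iff they are not consecutive on the cycle (mod `N`). -/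
def anticycleAdj (N : ℕ) (a b : Fin N) : Prop :=
  a ≠ b ∧ ((a : ℕ) + 1) % N ≠ (b : ℕ) ∧ ((b : ℕ) + 1) % N ≠ (a : ℕ)

/-- The edge ideal `I(G)` of the anticycle on `Fin N`. -/
noncomputable def anticycleIdeal (K : Type*) [Field K] (N : ℕ) :
    Ideal (MvPolynomial (Fin N) K) :=
  Ideal.span { m | ∃ a b : Fin N, anticycleAdj N a b ∧ m = X a * X b }

/-! The square of an edge ideal is spanned by products of two edges, so a monomial of degree four
in `I(G)²` is such a product, and in it every variable has a neighbour among the variables that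
occur. In `x y₁² z₁` the variable `z₁` is adjacent to neither `x` nor `y₁`, its two neighbours on
the cycle; likewise `z₂` in `x y_n² z₂`. -/

open Finsupp Pointwise

namespace Finsupp

theorem eq_of_le_of_degree_eq {σ : Type*} {d m : σ →₀ ℕ} (hle : d ≤ m)
    (hdeg : d.degree = m.degree) : d = m := by
  obtain ⟨k, rfl⟩ := le_iff_exists_add.mp hle
  have hk : k.degree = 0 := by rw [map_add] at hdeg; omega
  rw [(degree_eq_zero_iff k).mp hk, add_zero]

end Finsupp

namespace MvPolynomial

theorem span_monomial_mul_span_monomial {σ R : Type*} [CommSemiring R] (S T : Set (σ →₀ ℕ)) :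
    Ideal.span ((monomial · (1 : R)) '' S) * Ideal.span ((monomial · (1 : R)) '' T) =
      Ideal.span ((monomial · (1 : R)) '' (S + T)) := by
  rw [Ideal.span_mul_span', ← Set.image2_mul, ← Set.image2_add, Set.image_image2,
    Set.image2_image_left, Set.image2_image_right]
  simp only [monomial_mul, mul_one]

end MvPolynomial

namespace SimpleGraph

variable {σ : Type*} (G : SimpleGraph σ)

noncomputable def edgeIdeal (R : Type*) [CommSemiring R] : Ideal (MvPolynomial σ R) :=
  Ideal.span {m | ∃ a b, G.Adj a b ∧ m = X a * X b}

def edgeExponents : Set (σ →₀ ℕ) :=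
  {d | ∃ a b, G.Adj a b ∧ d = single a 1 + single b 1}

theorem edgeIdeal_eq_span_monomial (R : Type*) [CommSemiring R] :
    G.edgeIdeal R = Ideal.span ((monomial · (1 : R)) '' G.edgeExponents) := by
  rw [edgeIdeal]
  congr 1
  ext m
  simp only [edgeExponents, Set.mem_ofPred_eq, Set.mem_image]
  constructor
  · rintro ⟨a, b, hab, rfl⟩
    exact ⟨_, ⟨a, b, hab, rfl⟩, by simp only [X, monomial_mul, mul_one]⟩
  · rintro ⟨_, ⟨a, b, hab, rfl⟩, rfl⟩
    exact ⟨a, b, hab, by simp only [X, monomial_mul, mul_one]⟩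

theorem edgeIdeal_sq_eq_span_monomial (R : Type*) [CommSemiring R] :
    G.edgeIdeal R ^ 2 =
      Ideal.span ((monomial · (1 : R)) '' (G.edgeExponents + G.edgeExponents)) := by
  rw [sq, edgeIdeal_eq_span_monomial, span_monomial_mul_span_monomial]

theorem degree_of_mem_edgeExponents {d : σ →₀ ℕ} (hd : d ∈ G.edgeExponents) : d.degree = 2 := by
  obtain ⟨a, b, -, rfl⟩ := hd
  simp only [map_add, degree_single]

def HasNeighbourInSupport (d : σ →₀ ℕ) : Prop :=
  ∀ v, d v ≠ 0 → ∃ w, G.Adj v w ∧ d w ≠ 0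

theorem hasNeighbourInSupport_of_mem_edgeExponents {d : σ →₀ ℕ} (hd : d ∈ G.edgeExponents) :
    G.HasNeighbourInSupport d := by
  obtain ⟨a, b, hab, rfl⟩ := hd
  intro v hv
  by_cases hva : v = a
  · subst hva
    exact ⟨b, hab, by simp⟩
  · have hvb : v = b := by
      by_contra hvb
      simp [Ne.symm hva, Ne.symm hvb] at hv
    subst hvb
    exact ⟨a, hab.symm, by simp⟩

theorem HasNeighbourInSupport.add {d e : σ →₀ ℕ} (hd : G.HasNeighbourInSupport d)
    (he : G.HasNeighbourInSupport e) : G.HasNeighbourInSupport (d + e) := by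
  intro v hv
  by_cases hdv : d v = 0
  · obtain ⟨w, hvw, hw⟩ := he v (by simpa [hdv] using hv)
    exact ⟨w, hvw, by simp [hw]⟩
  · obtain ⟨w, hvw, hw⟩ := hd v hdv
    exact ⟨w, hvw, by simp [hw]⟩

theorem X_mul_X_mul_X_mul_X_notMem_edgeIdeal_sq (R : Type*) [CommSemiring R] [Nontrivial R]
    {p q r : σ} (hpr : ¬G.Adj p r) (hqr : ¬G.Adj q r) :
    (X p * X q * X q * X r : MvPolynomial σ R) ∉ G.edgeIdeal R ^ 2 := by
  set m : σ →₀ ℕ := single p 1 + single q 1 + single q 1 + single r 1 with hm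
  have hX : (X p * X q * X q * X r : MvPolynomial σ R) = monomial m 1 := by
    simp only [hm, X, monomial_mul, mul_one]
  rw [hX, edgeIdeal_sq_eq_span_monomial, mem_ideal_span_monomial_image]
  intro h
  obtain ⟨_, ⟨d, hd, e, he, rfl⟩, hle⟩ := h m (by classical simp)
  have hdm : d + e = m := eq_of_le_of_degree_eq hle <| by
    simp only [hm, map_add, degree_single, G.degree_of_mem_edgeExponents hd,
      G.degree_of_mem_edgeExponents he]
  have hnbr := (G.hasNeighbourInSupport_of_mem_edgeExponents hd).add G
    (G.hasNeighbourInSupport_of_mem_edgeExponents he)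
  rw [hdm] at hnbr
  obtain ⟨w, hrw, hw⟩ := hnbr r (by simp [hm])
  have hw' : w = p ∨ w = q ∨ w = r := by
    by_contra! hne
    simp [hm, Ne.symm hne.1, Ne.symm hne.2.1, Ne.symm hne.2.2] at hw
  rcases hw' with rfl | rfl | rfl
  · exact hpr hrw.symm
  · exact hqr hrw.symm
  · exact hrw.ne rfl

end SimpleGraph

def anticycle (N : ℕ) : SimpleGraph (Fin N) where
  Adj := anticycleAdj N
  symm := ⟨fun _ _ ⟨hne, hab, hba⟩ => ⟨hne.symm, hba, hab⟩⟩
  loopless := ⟨fun _ h => h.1 rfl⟩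

theorem anticycleIdeal_eq_edgeIdeal (K : Type*) [Field K] (N : ℕ) :
    anticycleIdeal K N = (anticycle N).edgeIdeal K := rfl

theorem anticycle_not_adj_of_succ {N : ℕ} {a b : Fin N} (h : ((a : ℕ) + 1) % N = b) :
    ¬(anticycle N).Adj a b :=
  fun hab => hab.2.1 h

/-- Neither `x y₁² z₁` nor `x y_n² z₂` belongs to `I(G)²`. -/
theorem not_mem_anticycle_sq (K : Type*) [Field K] (n : ℕ) (hn : 2 ≤ n) :
    ((X (vx n) * X (vy n ⟨0, by omega⟩) * X (vy n ⟨0, by omega⟩) * X (vz1 n) :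
        MvPolynomial (Fin (n + 3)) K) ∉ anticycleIdeal K (n + 3) ^ 2) ∧
    ((X (vx n) * X (vy n ⟨n - 1, by omega⟩) * X (vy n ⟨n - 1, by omega⟩) * X (vz2 n) :
        MvPolynomial (Fin (n + 3)) K) ∉ anticycleIdeal K (n + 3) ^ 2) := by
  rw [anticycleIdeal_eq_edgeIdeal]
  have hxz₁ : ¬(anticycle (n + 3)).Adj (vx n) (vz1 n) :=
    anticycle_not_adj_of_succ (Nat.mod_eq_of_lt (by simp [vx]))
  have hy₁z₁ : ¬(anticycle (n + 3)).Adj (vy n ⟨0, by omega⟩) (vz1 n) :=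
    fun h => anticycle_not_adj_of_succ (Nat.mod_eq_of_lt (by simp [vz1])) h.symm
  have hxz₂ : ¬(anticycle (n + 3)).Adj (vx n) (vz2 n) :=
    fun h => anticycle_not_adj_of_succ (Nat.mod_self (n + 3)) h.symm
  have hyₙz₂ : ¬(anticycle (n + 3)).Adj (vy n ⟨n - 1, by omega⟩) (vz2 n) :=
    anticycle_not_adj_of_succ <| by
      simp only [vy, vz2]; rw [Nat.mod_eq_of_lt (by omega)]; omega
  exact ⟨(anticycle _).X_mul_X_mul_X_mul_X_notMem_edgeIdeal_sq K hxz₁ hy₁z₁,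
    (anticycle _).X_mul_X_mul_X_mul_X_notMem_edgeIdeal_sq K hxz₂ hyₙz₂⟩
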